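/- The M×M discrete chirp matrix Ψ with entries Ψ[m',m] = e^{iπ/4}·e^{−iπ(m'−m)²/M} / √M (for m, m' ∈ {0,…,M−1}, M even) is unitary. -/

import Mathlib

/-!
In `conj (e^{-iπ(k-m)²/M}) · e^{-iπ(k-m')²/M}` the terms quadratic in `k` cancel, leaving a
constant phase times `ζ^k` with `ζ = e^{2πi(m'-m)/M}`. Summing over `k`, the columns of the
unnormalised chirp matrix are therefore orthogonal (a full geometric sum of an `M`-th root of
unity `ζ ≠ 1` vanishes) of squared length `M`, and the factor `e^{iπ/4}/√M` has squared modulus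
`1/M`.
-/

open Matrix Complex ComplexConjugate

theorem IsPrimitiveRoot.geom_sum_zpow_eq_zero {K : Type*} [Field K] {ω : K} {n : ℕ}
    (hω : IsPrimitiveRoot ω n) {d : ℤ} (hd : ¬ (n : ℤ) ∣ d) :
    ∑ k ∈ Finset.range n, (ω ^ d) ^ k = 0 := by
  have hne : ω ^ d ≠ 1 := fun h => hd ((hω.zpow_eq_one_iff_dvd d).mp h)
  have hpow : (ω ^ d) ^ n = 1 := by
    rw [← zpow_natCast, ← _root_.zpow_mul, hω.zpow_eq_one_iff_dvd]
    exact dvd_mul_left _ _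
  rw [geom_sum_eq hne, hpow, sub_self, zero_div]

theorem conj_exp_mul_exp_neg_sq_mul_I (t x a b : ℝ) :
    conj (exp (-(t * (x - a) ^ 2 : ℝ) * I)) * exp (-(t * (x - b) ^ 2 : ℝ) * I)
      = exp ((t * (a ^ 2 - b ^ 2) : ℝ) * I) * exp ((2 * t * (b - a) * x : ℝ) * I) := by
  rw [← Complex.exp_conj, ← exp_add, ← exp_add]
  congr 1
  simp only [map_mul, map_neg, conj_ofReal, conj_I]
  push_cast
  ring

/-- The chirp matrix without its normalising factor `e^{iπ/4}/√M`. -/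
noncomputable def chirpKernel (M : ℕ) : Matrix (Fin M) (Fin M) ℂ :=
  Matrix.of fun k m => exp (-(Real.pi / M * ((k : ℝ) - m) ^ 2 : ℝ) * I)

theorem chirpKernel_conjTranspose_mul_self {M : ℕ} (hM : 0 < M) :
    (chirpKernel M)ᴴ * chirpKernel M = (M : ℂ) • 1 := by
  have hω := isPrimitiveRoot_exp M hM.ne'
  ext m m'
  simp only [mul_apply, conjTranspose_apply, chirpKernel, of_apply, star_def,
    conj_exp_mul_exp_neg_sq_mul_I, Matrix.smul_apply, one_apply, smul_eq_mul]
  have hgeom : ∀ k : Fin M, exp ((2 * (Real.pi / M) * ((m' : ℝ) - m) * k : ℝ) * I)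
      = (exp (2 * Real.pi * I / M) ^ ((m' : ℤ) - m)) ^ (k : ℕ) := by
    intro k
    rw [← exp_int_mul, ← exp_nat_mul]
    congr 1
    push_cast
    ring
  simp only [hgeom, ← Finset.mul_sum, Fin.sum_univ_eq_sum_range
    (fun k => (exp (2 * Real.pi * I / M) ^ ((m' : ℤ) - m)) ^ k)]
  rcases eq_or_ne m m' with rfl | hmm'
  · simp
  · have hd : ¬ (M : ℤ) ∣ (m' : ℤ) - m := by
      intro hdvd
      have := Int.eq_zero_of_abs_lt_dvd hdvd (by rw [abs_lt]; omega)
      omega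
    rw [hω.geom_sum_zpow_eq_zero hd, mul_zero, if_neg hmm', mul_zero]

theorem chirp_matrix_unitary_general (M : ℕ) (hM : 0 < M)
    (Ψ : Matrix (Fin M) (Fin M) ℂ)
    (hΨ : ∀ m' m : Fin M, Ψ m' m = (1 / Real.sqrt M) * Complex.exp (Real.pi / 4 * Complex.I)
        * Complex.exp (-(Real.pi * ((m' : ℕ) - (m : ℕ) : ℤ)^2 / M) * Complex.I)) :
    Ψᴴ * Ψ = 1 := by
  set c : ℂ := (1 / Real.sqrt M) * exp (Real.pi / 4 * I)
  have hΨc : Ψ = c • chirpKernel M := by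
    ext m' m
    rw [hΨ, Matrix.smul_apply, chirpKernel, of_apply, smul_eq_mul]
    congr 3
    push_cast
    ring
  have hc : star c * c = 1 / M := by
    have hnorm : ‖exp (Real.pi / 4 * I)‖ = 1 := by
      simpa using norm_exp_ofReal_mul_I (Real.pi / 4)
    rw [star_def, conj_mul', norm_mul, hnorm, mul_one, norm_div, norm_one, norm_real,
      Real.norm_of_nonneg (Real.sqrt_nonneg _), ← ofReal_pow, div_pow, one_pow,
      Real.sq_sqrt (Nat.cast_nonneg M)]
    push_cast
    rfl
  rw [hΨc, conjTranspose_smul, smul_mul_smul_comm, chirpKernel_conjTranspose_mul_self hM,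
    smul_smul, hc, one_div, inv_mul_cancel₀ (Nat.cast_ne_zero.mpr hM.ne'), one_smul]

/-- The `M × M` discrete chirp matrix with entries
`Ψ[m',m] = (1/√M) e^{iπ/4} e^{−iπ(m'−m)²/M}` (`M` even) is unitary. -/
theorem chirp_matrix_unitary (M : ℕ) (hM : 0 < M) (hMeven : Even M)
    (Ψ : Matrix (Fin M) (Fin M) ℂ)
    (hΨ : ∀ m' m : Fin M, Ψ m' m = (1 / Real.sqrt M) * Complex.exp (Real.pi / 4 * Complex.I)
        * Complex.exp (-(Real.pi * ((m' : ℕ) - (m : ℕ) : ℤ)^2 / M) * Complex.I)) :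
    Ψᴴ * Ψ = 1 :=
  chirp_matrix_unitary_general M hM Ψ hΨ
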